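/- Let E = 𝔻̄ ∪ {2} ⊂ ℂ and let P_n(z) = (z - a_n) z^{n-1} with a_n = 3·2^{n-1}/(2^{n-1}+1) - 1. Then ‖P_n‖_E = 2^{n-1}·3/(2^{n-1}+1) ≤ 3, and for the Markov factors M_n(E,k) := sup{ ‖P^{(k)}‖_E : deg P ≤ n, ‖P‖_E = 1 } one has the lower bound M_n(E,k) ≥ (n-1)(n-2)⋯(n-k+1) · 2^{-k} · (n + (k/3)(2^n - 1)) for 1 ≤ k ≤ n. -/

import Mathlib

open Polynomial

/-- Sup norm of a polynomial on a set `E ⊂ ℂ`. -/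
noncomputable def supNorm (E : Set ℂ) (P : Polynomial ℂ) : ℝ :=
  sSup {x : ℝ | ∃ z ∈ E, x = ‖P.eval z‖}

/-- Markov factors `M_n(E,k) = sup{ ‖P^{(k)}‖_E : deg P ≤ n, ‖P‖_E = 1 }`. -/
noncomputable def markovFactor (E : Set ℂ) (n k : ℕ) : ℝ :=
  sSup {x : ℝ | ∃ P : Polynomial ℂ, P.natDegree ≤ n ∧ supNorm E P = 1 ∧
    x = supNorm E ((Polynomial.derivative)^[k] P)}

/-!
On the closed unit disk `|(z - a) z^{n-1}| ≤ 1 + a` for `a ≥ 0`, with equality at `z = -1`, and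
`a_n` is exactly the value for which `|P_n(2)| = (2 - a_n) 2^{n-1}` equals `1 + a_n` as well.
The lower bound on `M_n(E, k)` is `|P_n^{(k)}(2)| / ‖P_n‖_E`. The Markov factors are finite:
interpolating at `n + 1` points of `E` writes every `P` of degree `≤ n` with `‖P‖_E = 1` as a
combination of fixed Lagrange basis polynomials with coefficients of modulus `≤ 1`.
-/

section SupNorm

variable {E : Set ℂ}

lemma supNorm_eq_sSup_image (P : ℂ[X]) :
    supNorm E P = sSup ((fun z => ‖P.eval z‖) '' E) := by
  rw [_root_.supNorm]
  congr 1
  ext x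
  simp [eq_comm]

lemma supNorm_nonneg (P : ℂ[X]) : 0 ≤ supNorm E P :=
  Real.sSup_nonneg (by rintro x ⟨z, -, rfl⟩; exact norm_nonneg _)

lemma supNorm_le {P : ℂ[X]} {B : ℝ} (hB : 0 ≤ B) (h : ∀ z ∈ E, ‖P.eval z‖ ≤ B) :
    supNorm E P ≤ B :=
  Real.sSup_le (by rintro x ⟨z, hz, rfl⟩; exact h z hz) hB

lemma norm_eval_le_supNorm (hE : IsCompact E) (P : ℂ[X]) {z : ℂ} (hz : z ∈ E) :
    ‖P.eval z‖ ≤ supNorm E P := by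
  rw [supNorm_eq_sSup_image]
  exact le_csSup (hE.image (by fun_prop)).bddAbove ⟨z, hz, rfl⟩

lemma supNorm_eq_of_le_of_norm_eval_eq {P : ℂ[X]} {B : ℝ} (h : ∀ z ∈ E, ‖P.eval z‖ ≤ B)
    {z₀ : ℂ} (hz₀ : z₀ ∈ E) (hB : ‖P.eval z₀‖ = B) : supNorm E P = B :=
  IsGreatest.csSup_eq ⟨⟨z₀, hz₀, hB.symm⟩, by rintro x ⟨z, hz, rfl⟩; exact h z hz⟩

lemma supNorm_C_mul (c : ℂ) (P : ℂ[X]) :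
    supNorm E (C c * P) = ‖c‖ * supNorm E P := by
  simp only [supNorm_eq_sSup_image, eval_mul, eval_C, norm_mul]
  rw [← smul_eq_mul, ← Real.sSup_smul_of_nonneg (norm_nonneg c), ← Set.image_smul,
    Set.image_image]
  rfl

lemma bddAbove_markovFactor_set (hE : IsCompact E) (hinf : E.Infinite) (n k : ℕ) :
    BddAbove {x : ℝ | ∃ P : ℂ[X], P.natDegree ≤ n ∧ supNorm E P = 1 ∧
      x = supNorm E (derivative^[k] P)} := by
  obtain ⟨s, hsE, hcard⟩ := hinf.exists_subset_card_eq (n + 1)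
  refine ⟨∑ i ∈ s, supNorm E (derivative^[k] (Lagrange.basis s id i)), ?_⟩
  rintro x ⟨P, hdeg, hP, rfl⟩
  have hinterp : P = Lagrange.interpolate s id (fun i => P.eval i) :=
    Lagrange.eq_interpolate (Set.injOn_id _)
      (hcard ▸ degree_le_natDegree.trans_lt (by exact_mod_cast Nat.lt_succ_of_le hdeg))
  refine supNorm_le (Finset.sum_nonneg fun i _ => supNorm_nonneg _) fun z hz => ?_
  rw [hinterp, Lagrange.interpolate_apply, iterate_derivative_sum, eval_finsetSum]
  refine (norm_sum_le _ _).trans (Finset.sum_le_sum fun i hi => ?_)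
  rw [iterate_derivative_C_mul, eval_mul, eval_C, norm_mul, ← one_mul (supNorm E _)]
  exact mul_le_mul (hP ▸ norm_eval_le_supNorm hE P (hsE hi)) (norm_eval_le_supNorm hE _ hz)
    (norm_nonneg _) zero_le_one

lemma supNorm_iterate_derivative_le_markovFactor (hE : IsCompact E) (hinf : E.Infinite)
    {n : ℕ} {P : ℂ[X]} (hdeg : P.natDegree ≤ n) (hP : supNorm E P = 1) (k : ℕ) :
    supNorm E (derivative^[k] P) ≤ markovFactor E n k :=
  le_csSup (bddAbove_markovFactor_set hE hinf n k) ⟨P, hdeg, hP, rfl⟩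

lemma norm_eval_iterate_derivative_div_le_markovFactor (hE : IsCompact E) (hinf : E.Infinite)
    {n : ℕ} {P : ℂ[X]} (hdeg : P.natDegree ≤ n) (hP : 0 < supNorm E P) (k : ℕ) {z : ℂ}
    (hz : z ∈ E) : ‖(derivative^[k] P).eval z‖ / supNorm E P ≤ markovFactor E n k := by
  set c : ℂ := (((supNorm E P)⁻¹ : ℝ) : ℂ)
  have hc : ‖c‖ = (supNorm E P)⁻¹ := by simp [c, hP.le]
  have hdeg' : (C c * P).natDegree ≤ n := natDegree_C_mul_le c P |>.trans hdeg
  have hnorm : supNorm E (C c * P) = 1 := by rw [supNorm_C_mul, hc, inv_mul_cancel₀ hP.ne']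
  calc ‖(derivative^[k] P).eval z‖ / supNorm E P = ‖(derivative^[k] (C c * P)).eval z‖ := by
        rw [iterate_derivative_C_mul, eval_mul, eval_C, norm_mul, hc, div_eq_inv_mul]
    _ ≤ supNorm E (derivative^[k] (C c * P)) := norm_eval_le_supNorm hE _ hz
    _ ≤ markovFactor E n k := supNorm_iterate_derivative_le_markovFactor hE hinf hdeg' hnorm k

end SupNorm

lemma Nat.cast_descFactorial_eq_prod_range {R : Type*} [CommRing R] (m l : ℕ) :
    (m.descFactorial l : R) = ∏ i ∈ Finset.range l, ((m : R) - i) := by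
  rw [← descPochhammer_eval_eq_descFactorial, descPochhammer_eval_eq_prod_range]

lemma prod_Ico_one_succ_sub_eq_descFactorial {R : Type*} [CommRing R] (m l : ℕ) :
    ∏ j ∈ Finset.Ico 1 (l + 1), (((m + 1 : ℕ) : R) - j) = m.descFactorial l := by
  rw [Nat.cast_descFactorial_eq_prod_range, Finset.prod_Ico_eq_prod_range, Nat.add_sub_cancel]
  refine Finset.prod_congr rfl fun i _ => ?_
  push_cast
  ring

lemma eval_iterate_derivative_X_pow_mul_pow {R : Type*} [CommRing R] (m k : ℕ) (x : R) :
    (derivative^[k] (X ^ m : R[X])).eval x * x ^ k = m.descFactorial k * x ^ m := by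
  rw [iterate_derivative_X_pow_eq_natCast_mul, eval_mul, eval_natCast, eval_pow, eval_X, mul_assoc]
  rcases le_or_gt k m with hkm | hmk
  · rw [pow_sub_mul_pow x hkm]
  · rw [Nat.descFactorial_eq_zero_iff_lt.mpr hmk, Nat.cast_zero, zero_mul, zero_mul]

lemma eval_iterate_derivative_X_sub_C_mul_X_pow_mul_pow {R : Type*} [CommRing R] (a x : R)
    (m k : ℕ) :
    (derivative^[k] ((X - C a) * X ^ m)).eval x * x ^ k =
      (m + 1).descFactorial k * x ^ (m + 1) - a * m.descFactorial k * x ^ m := by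
  rw [sub_mul, ← pow_succ', iterate_derivative_sub, iterate_derivative_C_mul, eval_sub, eval_mul,
    eval_C, sub_mul, mul_assoc a, eval_iterate_derivative_X_pow_mul_pow,
    eval_iterate_derivative_X_pow_mul_pow, mul_assoc]

lemma supNorm_X_sub_C_mul_X_pow {a : ℝ} (ha : 0 ≤ a) (m : ℕ) (h2 : |2 - a| * 2 ^ m ≤ 1 + a) :
    supNorm (Metric.closedBall 0 1 ∪ {2}) ((X - C (a : ℂ)) * X ^ m) = 1 + a := by
  refine supNorm_eq_of_le_of_norm_eval_eq ?_ (z₀ := -1) (Or.inl (by simp)) ?_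
  · rintro z (hz | rfl)
    · rw [mem_closedBall_zero_iff] at hz
      simp only [eval_mul, eval_sub, eval_X, eval_C, eval_pow, norm_mul, norm_pow]
      calc ‖z - a‖ * ‖z‖ ^ m ≤ (‖z‖ + ‖(a : ℂ)‖) * 1 :=
            mul_le_mul (norm_sub_le _ _) (pow_le_one₀ (norm_nonneg _) hz) (by positivity)
              (by positivity)
        _ ≤ 1 + a := by rw [Complex.norm_real, Real.norm_of_nonneg ha]; linarith
    · have h2a : (2 : ℂ) - a = ((2 - a : ℝ) : ℂ) := by push_cast; rfl
      simpa only [eval_mul, eval_sub, eval_X, eval_C, eval_pow, norm_mul, norm_pow, h2a,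
        Complex.norm_real, Real.norm_eq_abs, Complex.norm_two] using h2
  · have h1a : (-1 : ℂ) - a = -((1 + a : ℝ) : ℂ) := by push_cast; ring
    simp only [eval_mul, eval_sub, eval_X, eval_C, eval_pow, norm_mul, norm_pow, h1a, norm_neg,
      Complex.norm_real, norm_one, one_pow, mul_one, Real.norm_of_nonneg (by linarith : 0 ≤ 1 + a)]

lemma eval_two_iterate_derivative_succ {M : ℝ} {m : ℕ} (hM : M * (2 ^ m + 1) = 3 * 2 ^ m)
    (l : ℕ) :
    (derivative^[l + 1] ((X - C ((M - 1 : ℝ) : ℂ)) * X ^ m)).eval 2 =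
      ((M * (m.descFactorial l * 2⁻¹ ^ (l + 1) *
        ((m + 1 : ℕ) + ((l + 1 : ℕ) / 3) * (2 ^ (m + 1) - 1))) : ℝ) : ℂ) := by
  have hMc : (M : ℂ) * (2 ^ m + 1) = 3 * 2 ^ m := by exact_mod_cast hM
  refine mul_right_cancel₀ (pow_ne_zero (l + 1) (two_ne_zero (α := ℂ))) ?_
  rw [eval_iterate_derivative_X_sub_C_mul_X_pow_mul_pow, Nat.succ_descFactorial_succ,
    Nat.cast_descFactorial_eq_prod_range m (l + 1), Finset.prod_range_succ,
    ← Nat.cast_descFactorial_eq_prod_range]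
  have hinv : (2 : ℂ)⁻¹ ^ (l + 1) * 2 ^ (l + 1) = 1 := by
    rw [← mul_pow, inv_mul_cancel₀ two_ne_zero, one_pow]
  push_cast
  linear_combination (-((m.descFactorial l : ℂ) * (3 * m - l + 2) / 3)) * hMc -
    (M * m.descFactorial l * (m + 1 + (l + 1) / 3 * (2 ^ (m + 1) - 1))) * hinv

lemma isCompact_closedBall_union_two : IsCompact (Metric.closedBall (0 : ℂ) 1 ∪ {2}) :=
  (isCompact_closedBall _ _).union isCompact_singleton

lemma infinite_closedBall_union_two : (Metric.closedBall (0 : ℂ) 1 ∪ {2}).Infinite :=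
  (infinite_of_mem_nhds 0 (Metric.closedBall_mem_nhds 0 one_pos)).mono Set.subset_union_left

theorem stmt17_general (n : ℕ) :
    let E : Set ℂ := Metric.closedBall (0 : ℂ) 1 ∪ {2}
    let a : ℂ := 3 * 2 ^ (n - 1) / (2 ^ (n - 1) + 1) - 1
    let P : Polynomial ℂ := (Polynomial.X - Polynomial.C a) * Polynomial.X ^ (n - 1)
    supNorm E P = 2 ^ (n - 1) * 3 / (2 ^ (n - 1) + 1) ∧
    supNorm E P ≤ 3 ∧
    ∀ k : ℕ, 1 ≤ k → k ≤ n →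
      (∏ j ∈ Finset.Ico 1 k, ((n : ℝ) - (j : ℝ))) * (2 : ℝ)⁻¹ ^ k *
          ((n : ℝ) + ((k : ℝ) / 3) * ((2 : ℝ) ^ n - 1)) ≤
        markovFactor E n k := by
  intro E a P
  set M : ℝ := 2 ^ (n - 1) * 3 / (2 ^ (n - 1) + 1) with hM_def
  have ht : (1 : ℝ) ≤ 2 ^ (n - 1) := one_le_pow₀ one_le_two
  have hM : M * (2 ^ (n - 1) + 1) = 3 * 2 ^ (n - 1) := by rw [hM_def]; field_simp
  have hM1 : 1 ≤ M := by rw [hM_def, le_div_iff₀ (by positivity)]; linarith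
  have hM3 : M ≤ 3 := by rw [hM_def, div_le_iff₀ (by positivity)]; linarith
  have ha : a = ((M - 1 : ℝ) : ℂ) := by simp only [a, hM_def]; push_cast; ring
  have hsup : supNorm E P = M := by
    have h2 : |2 - (M - 1)| * 2 ^ (n - 1) ≤ 1 + (M - 1) := by
      rw [abs_of_nonneg (by linarith)]; linarith
    simpa only [P, ha, add_sub_cancel] using supNorm_X_sub_C_mul_X_pow (by linarith) (n - 1) h2
  refine ⟨hsup, hsup ▸ hM3, fun k hk1 hkn => ?_⟩
  obtain ⟨m, rfl⟩ : ∃ m, n = m + 1 := ⟨n - 1, by omega⟩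
  obtain ⟨l, rfl⟩ : ∃ l, k = l + 1 := ⟨k - 1, by omega⟩
  have hdeg : P.natDegree ≤ m + 1 :=
    natDegree_mul_le.trans (by rw [natDegree_X_sub_C, natDegree_X_pow]; omega)
  have hval : (derivative^[l + 1] P).eval 2 = _ :=
    ha ▸ eval_two_iterate_derivative_succ (m := m) hM l
  rw [prod_Ico_one_succ_sub_eq_descFactorial]
  calc _ ≤ ‖(derivative^[l + 1] P).eval 2‖ / supNorm E P := by
        rw [hsup, le_div_iff₀ (by linarith), mul_comm, hval, Complex.norm_real]
        exact le_abs_self _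
    _ ≤ markovFactor E (m + 1) (l + 1) :=
        norm_eval_iterate_derivative_div_le_markovFactor isCompact_closedBall_union_two
          infinite_closedBall_union_two hdeg (by linarith) _ (Or.inr rfl)

/-- for `E = 𝔻̄ ∪ {2}` and `P_n(z) = (z - a_n) z^{n-1}` with
`a_n = 3·2^{n-1}/(2^{n-1}+1) - 1`, one has
`‖P_n‖_E = 3·2^{n-1}/(2^{n-1}+1) ≤ 3`, and
`M_n(E,k) ≥ (n-1)(n-2)⋯(n-k+1) · 2^{-k} · (n + (k/3)(2^n - 1))` for `1 ≤ k ≤ n`. -/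
theorem stmt17 (n : ℕ) (hn : 1 ≤ n) :
    let E : Set ℂ := Metric.closedBall (0 : ℂ) 1 ∪ {2}
    let a : ℂ := 3 * 2 ^ (n - 1) / (2 ^ (n - 1) + 1) - 1
    let P : Polynomial ℂ := (Polynomial.X - Polynomial.C a) * Polynomial.X ^ (n - 1)
    supNorm E P = 2 ^ (n - 1) * 3 / (2 ^ (n - 1) + 1) ∧
    supNorm E P ≤ 3 ∧
    ∀ k : ℕ, 1 ≤ k → k ≤ n →
      (∏ j ∈ Finset.Ico 1 k, ((n : ℝ) - (j : ℝ))) * (2 : ℝ)⁻¹ ^ k *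
          ((n : ℝ) + ((k : ℝ) / 3) * ((2 : ℝ) ^ n - 1)) ≤
        markovFactor E n k :=
  stmt17_general n
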